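/- Fix real parameters r, s, c₃ and c ≥ 0 with |s| < 1, such that H₊(z) ≤ 1+sz and H₋(z) ≤ 1−sz for all z ∈ [0,1]. If s ≥ 0, r·c₃ ≤ 0, and c₃² − c² ≥ s·r·c₃, then F(z) ≤ F(1) for all z ∈ [0,1], and F(1) = (1/4)(1+s+r+c₃)log₂((1+s+r+c₃)/(1+s)) + (1/4)(1+s−r−c₃)log₂((1+s−r−c₃)/(1+s)) + (1/4)(1−s+r−c₃)log₂((1−s+r−c₃)/(1−s)) + (1/4)(1−s−r+c₃)log₂((1−s−r+c₃)/(1−s)). -/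

import Mathlib

/-- `H₊(z) = √(c²(1−z²)+(r+c₃z)²)`. -/
noncomputable def Hp (r c₃ c z : ℝ) : ℝ := Real.sqrt (c^2*(1 - z^2) + (r + c₃*z)^2)

/-- `H₋(z) = √(c²(1−z²)+(r−c₃z)²)`. -/
noncomputable def Hm (r c₃ c z : ℝ) : ℝ := Real.sqrt (c^2*(1 - z^2) + (r - c₃*z)^2)

/-- The one-variable function `F(z)` from the quantum discord of X-states. -/
noncomputable def F (r s c₃ c z : ℝ) : ℝ :=
  (1/4) * (1 + s*z + Hp r c₃ c z) * Real.logb 2 ((1 + s*z + Hp r c₃ c z) / (1 + s*z)) +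
  (1/4) * (1 + s*z - Hp r c₃ c z) * Real.logb 2 ((1 + s*z - Hp r c₃ c z) / (1 + s*z)) +
  (1/4) * (1 - s*z + Hm r c₃ c z) * Real.logb 2 ((1 - s*z + Hm r c₃ c z) / (1 - s*z)) +
  (1/4) * (1 - s*z - Hm r c₃ c z) * Real.logb 2 ((1 - s*z - Hm r c₃ c z) / (1 - s*z))

/-! Write `u = 1 + s x` and `t = x / u`. The first half `pairTerm u (Hp x)` of `F` equals
`u · φ (P t)`, where `φ p = pairTerm 1 √p` and `P t = (Hp x / u)²` is a quadratic polynomial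
in `t`. The function `φ` is convex and increasing on `[0, 1]`, because its derivative is a power
series in `p` with positive coefficients. The leading coefficient of `P` is
`s²(c² + r²) - 2 s r c₃ + c₃² - c²`, which is nonnegative under the hypotheses, so `P` is convex.
It takes values in `[0, 1]`: it is manifestly nonnegative, and by convexity it is bounded by its
endpoint values `(|r ± c₃| / (1 ± s))² ≤ 1`. Hence `φ ∘ P` is convex, and so is its perspective
`x ↦ u φ (P (x / u))`. The second half of `F` is the same function with `(s, c₃)` replaced by
`(-s, -c₃)`, so `F` is convex and even on `[-1, 1]` and attains its maximum there at `z = 1`. -/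

open Real Set

noncomputable def pairTerm (u h : ℝ) : ℝ :=
  (1/4) * (u + h) * logb 2 ((u + h) / u) + (1/4) * (u - h) * logb 2 ((u - h) / u)

theorem pairTerm_abs (u h : ℝ) : pairTerm u |h| = pairTerm u h := by
  rcases abs_cases h with ⟨e, -⟩ | ⟨e, -⟩
  · rw [e]
  · rw [e]; unfold pairTerm; ring_nf

theorem pairTerm_eq_mul {u : ℝ} (h : ℝ) (hu : u ≠ 0) :
    pairTerm u h = u * pairTerm 1 (h / u) := by
  have e₁ : (u + h) / u = 1 + h / u := by field_simp
  have e₂ : (u - h) / u = 1 - h / u := by field_simp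
  simp only [pairTerm, div_one, e₁, e₂]
  field_simp

theorem pairTerm_one_eq (τ : ℝ) :
    pairTerm 1 τ = ((1 + τ) * log (1 + τ) + (1 - τ) * log (1 - τ)) / (4 * log 2) := by
  simp only [pairTerm, logb, div_one]; ring

theorem continuous_pairTerm_one : Continuous (pairTerm 1) := by
  rw [funext pairTerm_one_eq]
  exact ((continuous_mul_log.comp (by fun_prop)).add
    (continuous_mul_log.comp (by fun_prop))).div_const _

theorem hasDerivAt_pairTerm_one_sqrt {p : ℝ} (hp : p ∈ Ioo 0 1) :
    HasDerivAt (fun p => pairTerm 1 √p)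
      ((log (1 + √p) - log (1 - √p)) / √p / (8 * log 2)) p := by
  have hsp : 0 < √p := sqrt_pos.2 hp.1
  have hsp1 : √p < 1 := (sqrt_lt' one_pos).2 (by simpa using hp.2)
  have hsqrt := hasDerivAt_sqrt hp.1.ne'
  have h₁ := (hasDerivAt_mul_log (x := 1 + √p) (by linarith)).comp p (hsqrt.const_add 1)
  have h₂ := (hasDerivAt_mul_log (x := 1 - √p) (by linarith)).comp p (hsqrt.const_sub 1)
  rw [funext fun p => pairTerm_one_eq √p]
  refine ((h₁.add h₂).div_const (4 * log 2)).congr_deriv ?_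
  field_simp
  ring

theorem hasSum_log_sub_log_sqrt_div {p : ℝ} (hp : p ∈ Ioo 0 1) :
    HasSum (fun k : ℕ => 2 / (2 * k + 1) * p ^ k) ((log (1 + √p) - log (1 - √p)) / √p) := by
  have hsp : 0 < √p := sqrt_pos.2 hp.1
  have habs : |√p| < 1 := by
    rw [abs_of_pos hsp]; exact (sqrt_lt' one_pos).2 (by simpa using hp.2)
  have e : (fun k : ℕ => 2 / (2 * k + 1) * p ^ k)
      = fun k : ℕ => 2 * (1 / (2 * k + 1)) * √p ^ (2 * k + 1) / √p := by
    funext k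
    rw [pow_succ, pow_mul, sq_sqrt hp.1.le]
    field_simp
  rw [e]
  exact (hasSum_log_sub_log_of_abs_lt_one habs).div_const √p

theorem monotoneOn_log_sub_log_sqrt_div :
    MonotoneOn (fun p => (log (1 + √p) - log (1 - √p)) / √p) (Ioo 0 1) :=
  fun p hp p' hp' hpp' => hasSum_le (fun k => by gcongr; exact hp.1.le)
    (hasSum_log_sub_log_sqrt_div hp) (hasSum_log_sub_log_sqrt_div hp')

theorem convexOn_pairTerm_one_sqrt : ConvexOn ℝ (Icc 0 1) (fun p => pairTerm 1 √p) := by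
  refine MonotoneOn.convexOn_of_deriv (convex_Icc 0 1)
    (continuous_pairTerm_one.comp continuous_sqrt).continuousOn ?_ ?_ <;> rw [interior_Icc]
  · exact fun p hp => (hasDerivAt_pairTerm_one_sqrt hp).differentiableAt.differentiableWithinAt
  · intro p hp p' hp' hpp'
    rw [(hasDerivAt_pairTerm_one_sqrt hp).deriv, (hasDerivAt_pairTerm_one_sqrt hp').deriv]
    have := log_pos (by norm_num : (1:ℝ) < 2)
    exact div_le_div_of_nonneg_right (monotoneOn_log_sub_log_sqrt_div hp hp' hpp')
      (by positivity)

theorem monotoneOn_pairTerm_one_sqrt : MonotoneOn (fun p => pairTerm 1 √p) (Icc 0 1) := by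
  refine monotoneOn_of_deriv_nonneg (convex_Icc 0 1)
    (continuous_pairTerm_one.comp continuous_sqrt).continuousOn ?_ ?_ <;> rw [interior_Icc]
  · exact fun p hp => (hasDerivAt_pairTerm_one_sqrt hp).differentiableAt.differentiableWithinAt
  · intro p hp
    rw [(hasDerivAt_pairTerm_one_sqrt hp).deriv]
    have := hp.1
    exact div_nonneg ((hasSum_log_sub_log_sqrt_div hp).nonneg fun k => by positivity)
      (by positivity)

theorem ConvexOn.comp_of_monotoneOn_of_mapsTo {E : Type*} [AddCommGroup E] [Module ℝ E]
    {I : Set ℝ} {J : Set E} {g : ℝ → ℝ} {f : E → ℝ} (hg : ConvexOn ℝ I g)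
    (hg' : MonotoneOn g I) (hf : ConvexOn ℝ J f) (hfJ : MapsTo f J I) :
    ConvexOn ℝ J (g ∘ f) := by
  refine ⟨hf.1, fun x hx y hy a b ha hb hab => ?_⟩
  calc g (f (a • x + b • y)) ≤ g (a • f x + b • f y) :=
        hg' (hfJ (hf.1 hx hy ha hb hab)) (hg.1 (hfJ hx) (hfJ hy) ha hb hab)
          (hf.2 hx hy ha hb hab)
    _ ≤ a • g (f x) + b • g (f y) := hg.2 (hfJ hx) (hfJ hy) ha hb hab

theorem ConvexOn.perspective {f : ℝ → ℝ} {J S : Set ℝ} (hf : ConvexOn ℝ J f)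
    (hS : Convex ℝ S) {s : ℝ} (hu : ∀ x ∈ S, 0 < 1 + s * x)
    (hJ : MapsTo (fun x => x / (1 + s * x)) S J) :
    ConvexOn ℝ S (fun x => (1 + s * x) * f (x / (1 + s * x))) := by
  refine ⟨hS, fun x hx y hy a b ha hb hab => ?_⟩
  simp only [smul_eq_mul]
  have hux := hu x hx
  have huy := hu y hy
  have hum := hu _ (hS hx hy ha hb hab)
  simp only [smul_eq_mul] at hum
  set ux := 1 + s * x
  set uy := 1 + s * y
  set um := 1 + s * (a * x + b * y)
  have hum_eq : um = a * ux + b * uy := by linear_combination -hab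
  have hw : a * ux / um + b * uy / um = 1 := by
    rw [← add_div, ← hum_eq, div_self hum.ne']
  have hmid : (a * x + b * y) / um = a * ux / um * (x / ux) + b * uy / um * (y / uy) := by
    field_simp
  have hconv : f (a * ux / um * (x / ux) + b * uy / um * (y / uy)) ≤
      a * ux / um * f (x / ux) + b * uy / um * f (y / uy) :=
    hf.2 (hJ hx) (hJ hy) (by positivity) (by positivity) hw
  calc um * f ((a * x + b * y) / um)
      ≤ um * (a * ux / um * f (x / ux) + b * uy / um * f (y / uy)) := by rw [hmid]; gcongr
    _ = a * (ux * f (x / ux)) + b * (uy * f (y / uy)) := by field_simp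

theorem convexOn_univ_quadratic {a : ℝ} (ha : 0 ≤ a) (b c : ℝ) :
    ConvexOn ℝ univ (fun t => a * t ^ 2 + b * t + c) := by
  refine ⟨convex_univ, fun x _ y _ μ ν hμ hν hμν => ?_⟩
  simp only [smul_eq_mul]
  have hgap : μ * (a * x ^ 2 + b * x + c) + ν * (a * y ^ 2 + b * y + c) -
      (a * (μ * x + ν * y) ^ 2 + b * (μ * x + ν * y) + c) = μ * ν * a * (x - y) ^ 2 := by
    obtain rfl : ν = 1 - μ := by linarith
    ring
  nlinarith [mul_nonneg (mul_nonneg (mul_nonneg hμ hν) ha) (sq_nonneg (x - y))]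

theorem one_add_mul_pos {s x : ℝ} (hs : |s| < 1) (hx : x ∈ Icc (-1) 1) : 0 < 1 + s * x := by
  have : |s * x| < 1 := by
    rw [abs_mul]; exact (mul_le_of_le_one_right (abs_nonneg s) (abs_le.2 hx)).trans_lt hs
  linarith [neg_abs_le (s * x)]

theorem mapsTo_div_one_add_mul {s : ℝ} (hs : |s| < 1) :
    MapsTo (fun x => x / (1 + s * x)) (Icc (-1) 1) (Icc (-1 / (1 - s)) (1 / (1 + s))) := by
  intro x hx
  have hu := one_add_mul_pos hs hx
  have := abs_lt.1 hs
  constructor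
  · rw [div_le_div_iff₀ (by linarith) hu]; nlinarith [hx.1]
  · rw [div_le_div_iff₀ hu (by linarith)]; nlinarith [hx.2]

/-- `(Hp x / (1 + s x))²` in the variable `t = x / (1 + s x)`, i.e. with `x = t / (1 - s t)`. -/
def HpRatioSq (r s c₃ c t : ℝ) : ℝ :=
  c ^ 2 * ((1 - (1 + s) * t) * (1 + (1 - s) * t)) + (r * (1 - s * t) + c₃ * t) ^ 2

def HpRatioSqLeadingCoeff (r s c₃ c : ℝ) : ℝ :=
  s ^ 2 * (c ^ 2 + r ^ 2) - 2 * s * (r * c₃) + (c₃ ^ 2 - c ^ 2)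

section HpRatioSq

variable {r s c₃ c : ℝ}

theorem HpRatioSq_div {x : ℝ} (hu : 1 + s * x ≠ 0) :
    HpRatioSq r s c₃ c (x / (1 + s * x)) =
      (c ^ 2 * (1 - x ^ 2) + (r + c₃ * x) ^ 2) / (1 + s * x) ^ 2 := by
  unfold HpRatioSq
  field_simp
  ring

theorem Hp_div_eq_sqrt_HpRatioSq {x : ℝ} (hu : 0 < 1 + s * x) :
    Hp r c₃ c x / (1 + s * x) = √(HpRatioSq r s c₃ c (x / (1 + s * x))) := by
  rw [HpRatioSq_div hu.ne', sqrt_div' _ (sq_nonneg _), sqrt_sq hu.le, Hp]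

theorem HpRatioSq_le_one {x : ℝ} (hx : x ∈ Icc (-1) 1) (hu : 0 < 1 + s * x)
    (h : Hp r c₃ c x ≤ 1 + s * x) : HpRatioSq r s c₃ c (x / (1 + s * x)) ≤ 1 := by
  have hq : 0 ≤ c ^ 2 * (1 - x ^ 2) + (r + c₃ * x) ^ 2 := by
    have : 0 ≤ 1 - x ^ 2 := by nlinarith [hx.1, hx.2]
    positivity
  rw [HpRatioSq_div hu.ne', ← sq_sqrt hq, ← div_pow]
  exact pow_le_one₀ (by positivity) ((div_le_one hu).2 h)

theorem convexOn_HpRatioSq (hK : 0 ≤ HpRatioSqLeadingCoeff r s c₃ c) :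
    ConvexOn ℝ univ (HpRatioSq r s c₃ c) := by
  convert convexOn_univ_quadratic hK (2 * (r * c₃) - 2 * s * (c ^ 2 + r ^ 2)) (c ^ 2 + r ^ 2)
    using 1
  funext t
  unfold HpRatioSq HpRatioSqLeadingCoeff
  ring

theorem mapsTo_HpRatioSq (hs : |s| < 1) (h₁ : Hp r c₃ c 1 ≤ 1 + s)
    (h₂ : Hp r c₃ c (-1) ≤ 1 - s) (hK : 0 ≤ HpRatioSqLeadingCoeff r s c₃ c) :
    MapsTo (HpRatioSq r s c₃ c) (Icc (-1 / (1 - s)) (1 / (1 + s))) (Icc 0 1) := by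
  have := abs_lt.1 hs
  intro t ht
  have hlo : 0 ≤ 1 + (1 - s) * t := by
    have := (div_le_iff₀ (by linarith : 0 < 1 - s)).1 ht.1; linarith
  have hhi : 0 ≤ 1 - (1 + s) * t := by
    have := (le_div_iff₀ (by linarith : 0 < 1 + s)).1 ht.2; linarith
  refine ⟨by unfold HpRatioSq; positivity, ?_⟩
  have hseg : t ∈ segment ℝ (-1 / (1 - s)) (1 / (1 + s)) := by
    rwa [segment_eq_Icc (ht.1.trans ht.2)]
  refine ((convexOn_HpRatioSq hK).le_on_segment (mem_univ _) (mem_univ _) hseg).trans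
    (max_le ?_ ?_)
  · have := HpRatioSq_le_one (r := r) (c₃ := c₃) (c := c) (left_mem_Icc.2 (by norm_num))
      (by linarith : 0 < 1 + s * -1) (by linarith)
    rwa [show (1:ℝ) + s * -1 = 1 - s by ring] at this
  · have := HpRatioSq_le_one (r := r) (c₃ := c₃) (c := c) (right_mem_Icc.2 (by norm_num))
      (by linarith : 0 < 1 + s * 1) (by linarith)
    rwa [mul_one] at this

theorem convexOn_pairTerm_Hp (hs : |s| < 1) (h₁ : Hp r c₃ c 1 ≤ 1 + s)
    (h₂ : Hp r c₃ c (-1) ≤ 1 - s) (hK : 0 ≤ HpRatioSqLeadingCoeff r s c₃ c) :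
    ConvexOn ℝ (Icc (-1) 1) fun x => pairTerm (1 + s * x) (Hp r c₃ c x) := by
  have hf := convexOn_pairTerm_one_sqrt.comp_of_monotoneOn_of_mapsTo monotoneOn_pairTerm_one_sqrt
    ((convexOn_HpRatioSq hK).subset (subset_univ _) (convex_Icc _ _))
    (mapsTo_HpRatioSq hs h₁ h₂ hK)
  refine (hf.perspective (convex_Icc _ _) (fun x hx => one_add_mul_pos hs hx)
    (mapsTo_div_one_add_mul hs)).congr fun x hx => ?_
  have hu := one_add_mul_pos hs hx
  simp only [Function.comp, pairTerm_eq_mul _ hu.ne', Hp_div_eq_sqrt_HpRatioSq hu]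

end HpRatioSq

theorem Hp_neg (r c₃ c z : ℝ) : Hp r c₃ c (-z) = Hm r c₃ c z := by
  unfold Hp Hm; ring_nf

theorem Hm_neg (r c₃ c z : ℝ) : Hm r c₃ c (-z) = Hp r c₃ c z := by
  unfold Hp Hm; ring_nf

theorem Hm_eq_Hp_neg (r c₃ c z : ℝ) : Hm r c₃ c z = Hp r (-c₃) c z := by
  unfold Hp Hm; ring_nf

theorem Hp_one (r c₃ c : ℝ) : Hp r c₃ c 1 = |r + c₃| := by
  simp [Hp, sqrt_sq_eq_abs]

theorem Hm_one (r c₃ c : ℝ) : Hm r c₃ c 1 = |r - c₃| := by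
  simp [Hm, sqrt_sq_eq_abs]

theorem F_eq_pairTerm (r s c₃ c z : ℝ) :
    F r s c₃ c z =
      pairTerm (1 + s * z) (Hp r c₃ c z) + pairTerm (1 - s * z) (Hm r c₃ c z) := by
  unfold F pairTerm; ring

theorem F_neg (r s c₃ c z : ℝ) : F r s c₃ c (-z) = F r s c₃ c z := by
  rw [F_eq_pairTerm, F_eq_pairTerm, Hp_neg, Hm_neg, mul_neg, sub_neg_eq_add, ← sub_eq_add_neg,
    add_comm]

theorem F_one (r s c₃ c : ℝ) :
    F r s c₃ c 1 =
      (1/4) * (1 + s + r + c₃) * Real.logb 2 ((1 + s + r + c₃) / (1 + s)) +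
      (1/4) * (1 + s - r - c₃) * Real.logb 2 ((1 + s - r - c₃) / (1 + s)) +
      (1/4) * (1 - s + r - c₃) * Real.logb 2 ((1 - s + r - c₃) / (1 - s)) +
      (1/4) * (1 - s - r + c₃) * Real.logb 2 ((1 - s - r + c₃) / (1 - s)) := by
  rw [F_eq_pairTerm, Hp_one, Hm_one, pairTerm_abs, pairTerm_abs]
  unfold pairTerm
  ring_nf

theorem convexOn_F {r s c₃ c : ℝ} (hs : |s| < 1) (h₁ : Hp r c₃ c 1 ≤ 1 + s)
    (h₂ : Hm r c₃ c 1 ≤ 1 - s) (hK : 0 ≤ HpRatioSqLeadingCoeff r s c₃ c) :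
    ConvexOn ℝ (Icc (-1) 1) (F r s c₃ c) := by
  have hp := convexOn_pairTerm_Hp hs h₁ (by rwa [Hp_neg]) hK
  have hm := convexOn_pairTerm_Hp (s := -s) (c₃ := -c₃) (by rwa [abs_neg])
    (by rwa [← Hm_eq_Hp_neg, ← sub_eq_add_neg])
    (by rwa [← Hm_eq_Hp_neg, Hm_neg, sub_neg_eq_add])
    (by unfold HpRatioSqLeadingCoeff at hK ⊢; linarith)
  refine (hp.add hm).congr fun z _ => ?_
  simp only [F_eq_pairTerm, Hm_eq_Hp_neg, Pi.add_apply, neg_mul, ← sub_eq_add_neg]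

theorem F_max_at_one_case_a_general (r s c₃ c : ℝ) (hs : |s| < 1)
    (hHp : ∀ z ∈ Set.Icc (0:ℝ) 1, Hp r c₃ c z ≤ 1 + s*z)
    (hHm : ∀ z ∈ Set.Icc (0:ℝ) 1, Hm r c₃ c z ≤ 1 - s*z)
    (hs0 : 0 ≤ s) (hrc₃ : r * c₃ ≤ 0) (hmix : s * (r * c₃) ≤ c₃^2 - c^2) :
    (∀ z ∈ Set.Icc (0:ℝ) 1, F r s c₃ c z ≤ F r s c₃ c 1) ∧
    F r s c₃ c 1 =
      (1/4) * (1 + s + r + c₃) * Real.logb 2 ((1 + s + r + c₃) / (1 + s)) +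
      (1/4) * (1 + s - r - c₃) * Real.logb 2 ((1 + s - r - c₃) / (1 + s)) +
      (1/4) * (1 - s + r - c₃) * Real.logb 2 ((1 - s + r - c₃) / (1 - s)) +
      (1/4) * (1 - s - r + c₃) * Real.logb 2 ((1 - s - r + c₃) / (1 - s)) := by
  have hK : 0 ≤ HpRatioSqLeadingCoeff r s c₃ c := by
    unfold HpRatioSqLeadingCoeff
    nlinarith [mul_nonneg hs0 (neg_nonneg.2 hrc₃),
      mul_nonneg (sq_nonneg s) (add_nonneg (sq_nonneg c) (sq_nonneg r))]
  have h₁ : Hp r c₃ c 1 ≤ 1 + s := by simpa using hHp 1 (right_mem_Icc.2 zero_le_one)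
  have h₂ : Hm r c₃ c 1 ≤ 1 - s := by simpa using hHm 1 (right_mem_Icc.2 zero_le_one)
  refine ⟨fun z hz => ?_, F_one r s c₃ c⟩
  have hseg : z ∈ segment ℝ (-1) 1 := by
    rw [segment_eq_Icc (by norm_num)]; exact ⟨by linarith [hz.1], hz.2⟩
  -- `F` is even, so `max (F (-1)) (F 1) = F 1`
  simpa [F_neg] using (convexOn_F hs h₁ h₂ hK).le_on_segment (left_mem_Icc.2 (by norm_num))
    (right_mem_Icc.2 (by norm_num)) hseg

theorem F_max_at_one_case_a (r s c₃ c : ℝ) (hc : 0 ≤ c) (hs : |s| < 1)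
    (hHp : ∀ z ∈ Set.Icc (0:ℝ) 1, Hp r c₃ c z ≤ 1 + s*z)
    (hHm : ∀ z ∈ Set.Icc (0:ℝ) 1, Hm r c₃ c z ≤ 1 - s*z)
    (hs0 : 0 ≤ s) (hrc₃ : r * c₃ ≤ 0) (hmix : s * (r * c₃) ≤ c₃^2 - c^2) :
    (∀ z ∈ Set.Icc (0:ℝ) 1, F r s c₃ c z ≤ F r s c₃ c 1) ∧
    F r s c₃ c 1 =
      (1/4) * (1 + s + r + c₃) * Real.logb 2 ((1 + s + r + c₃) / (1 + s)) +
      (1/4) * (1 + s - r - c₃) * Real.logb 2 ((1 + s - r - c₃) / (1 + s)) +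
      (1/4) * (1 - s + r - c₃) * Real.logb 2 ((1 - s + r - c₃) / (1 - s)) +
      (1/4) * (1 - s - r + c₃) * Real.logb 2 ((1 - s - r + c₃) / (1 - s)) :=
  F_max_at_one_case_a_general r s c₃ c hs hHp hHm hs0 hrc₃ hmix
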